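/- With w_{n,k} as above (n ≥ 3, 1 ≤ k < n/2, γ = 2(n−k)/(n−2k)), on the open region {0 < t < r^γ} the function w_{n,k} is smooth and satisfies det D²w_{n,k} = (1 − s²)^{n−k}, where s = r^{−γ}t; in particular det D²w_{n,k} ≤ 1 there. -/

import Mathlib

noncomputable section
namespace S10

variable {n : ℕ}

def Rq (m : ℕ) (x : EuclideanSpace ℝ (Fin n)) : ℝ :=
  ∑ i : Fin n, if (i : ℕ) < m then x i ^ 2 else 0

def Tq (m : ℕ) (x : EuclideanSpace ℝ (Fin n)) : ℝ :=
  ∑ i : Fin n, if m ≤ (i : ℕ) then x i ^ 2 else 0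

def LR (m : ℕ) (x : EuclideanSpace ℝ (Fin n)) : EuclideanSpace ℝ (Fin n) →L[ℝ] ℝ :=
  ∑ i : Fin n, (if (i : ℕ) < m then 2 * x i else 0) • EuclideanSpace.proj i

def LT (m : ℕ) (x : EuclideanSpace ℝ (Fin n)) : EuclideanSpace ℝ (Fin n) →L[ℝ] ℝ :=
  ∑ i : Fin n, (if m ≤ (i : ℕ) then 2 * x i else 0) • EuclideanSpace.proj i

lemma sq_hasFDerivAt (i : Fin n) (x : EuclideanSpace ℝ (Fin n)) :
    HasFDerivAt (fun y : EuclideanSpace ℝ (Fin n) => y i ^ 2)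
      ((2 * x i) • EuclideanSpace.proj (𝕜 := ℝ) i) x := by
  have h := (EuclideanSpace.proj (𝕜 := ℝ) i).hasFDerivAt (x := x)
  have := h.mul h
  refine (this.congr_fderiv ?_).congr_of_eventuallyEq (Filter.Eventually.of_forall fun y => ?_)
  · ext v; simp; ring
  · simp; ring

lemma hasFDerivAt_Rq (m : ℕ) (x : EuclideanSpace ℝ (Fin n)) :
    HasFDerivAt (Rq m) (LR m x) x := by
  apply HasFDerivAt.fun_sum
  intro i _
  by_cases hi : (i : ℕ) < m
  · simpa [hi] using sq_hasFDerivAt i x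
  · simpa [hi] using hasFDerivAt_const (0 : ℝ) x

lemma hasFDerivAt_Tq (m : ℕ) (x : EuclideanSpace ℝ (Fin n)) :
    HasFDerivAt (Tq m) (LT m x) x := by
  apply HasFDerivAt.fun_sum
  intro i _
  by_cases hi : m ≤ (i : ℕ)
  · simpa [hi] using sq_hasFDerivAt i x
  · simpa [hi] using hasFDerivAt_const (0 : ℝ) x

lemma LR_apply (m : ℕ) (x : EuclideanSpace ℝ (Fin n)) (j : Fin n) :
    LR m x (EuclideanSpace.single j 1) = if (j : ℕ) < m then 2 * x j else 0 := by
  simp only [LR, ContinuousLinearMap.sum_apply, ContinuousLinearMap.smul_apply,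
    PiLp.proj_apply, EuclideanSpace.single_apply, smul_eq_mul]
  rw [Finset.sum_eq_single j]
  · simp
  · intro b _ hb; simp [hb, Ne.symm hb]
  · simp

lemma LT_apply (m : ℕ) (x : EuclideanSpace ℝ (Fin n)) (j : Fin n) :
    LT m x (EuclideanSpace.single j 1) = if m ≤ (j : ℕ) then 2 * x j else 0 := by
  simp only [LT, ContinuousLinearMap.sum_apply, ContinuousLinearMap.smul_apply,
    PiLp.proj_apply, EuclideanSpace.single_apply, smul_eq_mul]
  rw [Finset.sum_eq_single j]
  · simp
  · intro b _ hb; simp [hb, Ne.symm hb]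
  · simp

lemma contDiff_Rq (m : ℕ) : ContDiff ℝ (⊤ : ℕ∞) (Rq (n := n) m) := by
  apply ContDiff.sum
  intro i _
  by_cases hi : (i : ℕ) < m
  · simp only [hi, if_true]
    exact ((EuclideanSpace.proj (𝕜 := ℝ) i).contDiff).pow 2
  · simp only [hi, if_false]; exact contDiff_const

lemma contDiff_Tq (m : ℕ) : ContDiff ℝ (⊤ : ℕ∞) (Tq (n := n) m) := by
  apply ContDiff.sum
  intro i _
  by_cases hi : m ≤ (i : ℕ)
  · simp only [hi, if_true]
    exact ((EuclideanSpace.proj (𝕜 := ℝ) i).contDiff).pow 2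
  · simp only [hi, if_false]; exact contDiff_const

lemma Rq_nonneg (m : ℕ) (x : EuclideanSpace ℝ (Fin n)) : 0 ≤ Rq m x := by
  apply Finset.sum_nonneg; intro i _; positivity

lemma Tq_nonneg (m : ℕ) (x : EuclideanSpace ℝ (Fin n)) : 0 ≤ Tq m x := by
  apply Finset.sum_nonneg; intro i _; positivity


variable (K e : ℝ) (m : ℕ)

def aF (x : EuclideanSpace ℝ (Fin n)) : ℝ :=
  K * e * (Rq m x ^ (e - 1) - Rq m x ^ (-e - 1) * Tq m x)

def bF (x : EuclideanSpace ℝ (Fin n)) : ℝ := K * Rq m x ^ (-e)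

def Wf (x : EuclideanSpace ℝ (Fin n)) : ℝ :=
  K * ((Rq m x ^ e + Rq m x ^ (-e) * Tq m x) / 2) * 2

def Wf' : EuclideanSpace ℝ (Fin n) → ℝ := fun x =>
  K * (Rq m x ^ e + Rq m x ^ (-e) * Tq m x)

lemma hasFDerivAt_Wf {x : EuclideanSpace ℝ (Fin n)} (hx : Rq m x ≠ 0) :
    HasFDerivAt (Wf' K e m)
      (aF K e m x • LR m x + bF K e m x • LT m x) x := by
  have h1 : HasFDerivAt (fun y => Rq m y ^ e)
      ((e * Rq m x ^ (e - 1)) • LR m x) x :=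
    (hasFDerivAt_Rq m x).rpow_const (Or.inl hx)
  have h2 : HasFDerivAt (fun y => Rq m y ^ (-e))
      ((-e * Rq m x ^ (-e - 1)) • LR m x) x :=
    (hasFDerivAt_Rq m x).rpow_const (Or.inl hx)
  have h3 := h2.mul (hasFDerivAt_Tq m x)
  have h4 := (h1.add h3).const_mul K
  refine h4.congr_fderiv ?_
  ext v
  simp only [aF, bF, ContinuousLinearMap.add_apply, ContinuousLinearMap.smul_apply,
    smul_eq_mul, ContinuousLinearMap.coe_smul', Pi.smul_apply]
  ring

lemma hasFDerivAt_aF {x : EuclideanSpace ℝ (Fin n)} (hx : Rq m x ≠ 0) :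
    HasFDerivAt (aF K e m)
      ((K * e * ((e - 1) * Rq m x ^ (e - 2) + (e + 1) * Rq m x ^ (-e - 2) * Tq m x)) • LR m x
        + (-(K * e) * Rq m x ^ (-e - 1)) • LT m x) x := by
  have h1 : HasFDerivAt (fun y => Rq m y ^ (e - 1))
      (((e - 1) * Rq m x ^ (e - 1 - 1)) • LR m x) x :=
    (hasFDerivAt_Rq m x).rpow_const (Or.inl hx)
  have h2 : HasFDerivAt (fun y => Rq m y ^ (-e - 1))
      (((-e - 1) * Rq m x ^ (-e - 1 - 1)) • LR m x) x :=
    (hasFDerivAt_Rq m x).rpow_const (Or.inl hx)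
  have h3 := h2.mul (hasFDerivAt_Tq m x)
  have h4 := (h1.sub h3).const_mul (K * e)
  rw [show e - 1 - 1 = e - 2 by ring] at h1
  rw [show -e - 1 - 1 = -e - 2 by ring] at h2 h4
  refine h4.congr_fderiv ?_
  ext v
  simp only [ContinuousLinearMap.add_apply, ContinuousLinearMap.smul_apply, smul_eq_mul,
    ContinuousLinearMap.coe_smul', Pi.smul_apply, ContinuousLinearMap.coe_sub', Pi.sub_apply]
  ring

lemma hasFDerivAt_bF {x : EuclideanSpace ℝ (Fin n)} (hx : Rq m x ≠ 0) :
    HasFDerivAt (bF K e m) ((K * (-e) * Rq m x ^ (-e - 1)) • LR m x) x := by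
  have h2 : HasFDerivAt (fun y => Rq m y ^ (-e))
      ((-e * Rq m x ^ (-e - 1)) • LR m x) x :=
    (hasFDerivAt_Rq m x).rpow_const (Or.inl hx)
  have h4 := h2.const_mul K
  refine h4.congr_fderiv ?_
  ext v
  simp only [ContinuousLinearMap.smul_apply, smul_eq_mul, ContinuousLinearMap.coe_smul',
    Pi.smul_apply]
  ring


def qP (m : ℕ) (j : Fin n) (x : EuclideanSpace ℝ (Fin n)) : ℝ :=
  if (j : ℕ) < m then 2 * x j else 0

def qQ (m : ℕ) (j : Fin n) (x : EuclideanSpace ℝ (Fin n)) : ℝ :=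
  if m ≤ (j : ℕ) then 2 * x j else 0

def LqP (m : ℕ) (j : Fin n) : EuclideanSpace ℝ (Fin n) →L[ℝ] ℝ :=
  if (j : ℕ) < m then (2 : ℝ) • EuclideanSpace.proj j else 0

def LqQ (m : ℕ) (j : Fin n) : EuclideanSpace ℝ (Fin n) →L[ℝ] ℝ :=
  if m ≤ (j : ℕ) then (2 : ℝ) • EuclideanSpace.proj j else 0

lemma hasFDerivAt_qP (j : Fin n) (x : EuclideanSpace ℝ (Fin n)) :
    HasFDerivAt (qP m j) (LqP m j) x := by
  unfold qP LqP
  by_cases hj : (j : ℕ) < m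
  · simp only [hj, if_true]
    exact (EuclideanSpace.proj (𝕜 := ℝ) j).hasFDerivAt.const_mul 2
  · simp only [hj, if_false]
    exact hasFDerivAt_const 0 x

lemma hasFDerivAt_qQ (j : Fin n) (x : EuclideanSpace ℝ (Fin n)) :
    HasFDerivAt (qQ m j) (LqQ m j) x := by
  unfold qQ LqQ
  by_cases hj : m ≤ (j : ℕ)
  · simp only [hj, if_true]
    exact (EuclideanSpace.proj (𝕜 := ℝ) j).hasFDerivAt.const_mul 2
  · simp only [hj, if_false]
    exact hasFDerivAt_const 0 x

lemma LqP_apply (m : ℕ) (i j : Fin n) :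
    LqP m j (EuclideanSpace.single i 1) = if (j : ℕ) < m ∧ i = j then 2 else 0 := by
  unfold LqP
  by_cases hj : (j : ℕ) < m
  · by_cases hij : i = j <;>
      simp [hj, hij, EuclideanSpace.single_apply, PiLp.proj_apply, Ne.symm]
  · simp [hj]

lemma LqQ_apply (m : ℕ) (i j : Fin n) :
    LqQ m j (EuclideanSpace.single i 1) = if m ≤ (j : ℕ) ∧ i = j then 2 else 0 := by
  unfold LqQ
  by_cases hj : m ≤ (j : ℕ)
  · by_cases hij : i = j <;>
      simp [hj, hij, EuclideanSpace.single_apply, PiLp.proj_apply, Ne.symm]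
  · simp [hj]

def pj (j : Fin n) (x : EuclideanSpace ℝ (Fin n)) : ℝ :=
  aF K e m x * qP m j x + bF K e m x * qQ m j x

lemma fderiv_Wf'_single {x : EuclideanSpace ℝ (Fin n)} (hx : Rq m x ≠ 0) (j : Fin n) :
    fderiv ℝ (Wf' K e m) x (EuclideanSpace.single j 1) = pj K e m j x := by
  rw [(hasFDerivAt_Wf K e m hx).fderiv]
  simp only [ContinuousLinearMap.add_apply, ContinuousLinearMap.smul_apply, smul_eq_mul,
    LR_apply, LT_apply, pj, qP, qQ]

lemma hasFDerivAt_pj {x : EuclideanSpace ℝ (Fin n)} (hx : Rq m x ≠ 0) (j : Fin n) :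
    HasFDerivAt (pj K e m j)
      ((aF K e m x • LqP m j
        + qP m j x • ((K * e * ((e - 1) * Rq m x ^ (e - 2)
            + (e + 1) * Rq m x ^ (-e - 2) * Tq m x)) • LR m x
          + (-(K * e) * Rq m x ^ (-e - 1)) • LT m x))
        + (bF K e m x • LqQ m j
          + qQ m j x • ((K * (-e) * Rq m x ^ (-e - 1)) • LR m x))) x :=
  ((hasFDerivAt_aF K e m hx).mul (hasFDerivAt_qP m j x)).add
    ((hasFDerivAt_bF K e m hx).mul (hasFDerivAt_qQ m j x))


def uvec (m : ℕ) (x : Fin n → ℝ) : Fin n → ℝ := fun i => if (i : ℕ) < m then x i else 0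

def vvec (m : ℕ) (x : Fin n → ℝ) : Fin n → ℝ := fun i => if (i : ℕ) < m then 0 else x i

def Mm (m : ℕ) (d1 d2 A B : ℝ) (x : Fin n → ℝ) : Matrix (Fin n) (Fin n) ℝ :=
  Matrix.of fun i j =>
    (if i = j then (if (i : ℕ) < m then d1 else d2) else 0)
      + A * uvec m x i * uvec m x j
      + B * (uvec m x i * vvec m x j + vvec m x i * uvec m x j)

noncomputable def hess' (u : EuclideanSpace ℝ (Fin n) → ℝ)
    (x : EuclideanSpace ℝ (Fin n)) : Matrix (Fin n) (Fin n) ℝ :=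
  Matrix.of fun i j =>
    fderiv ℝ (fun y => fderiv ℝ u y (EuclideanSpace.single j 1)) x (EuclideanSpace.single i 1)

lemma hess'_Wf'_eq {x : EuclideanSpace ℝ (Fin n)} (hx : 0 < Rq m x) :
    hess' (Wf' K e m) x =
      Mm m (2 * aF K e m x) (2 * bF K e m x)
        (4 * (K * e * ((e - 1) * Rq m x ^ (e - 2) + (e + 1) * Rq m x ^ (-e - 2) * Tq m x)))
        (4 * (-(K * e) * Rq m x ^ (-e - 1))) x := by
  have hopen : IsOpen {y : EuclideanSpace ℝ (Fin n) | 0 < Rq m y} :=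
    isOpen_lt continuous_const (contDiff_Rq m).continuous
  ext i j
  have hev : (fun y => fderiv ℝ (Wf' K e m) y (EuclideanSpace.single j 1))
      =ᶠ[nhds x] pj K e m j := by
    filter_upwards [hopen.mem_nhds hx] with y hy
    exact fderiv_Wf'_single K e m (ne_of_gt hy) j
  have h1 : (hess' (Wf' K e m) x) i j
      = fderiv ℝ (pj K e m j) x (EuclideanSpace.single i 1) := by
    simp only [hess', Matrix.of_apply]
    rw [hev.fderiv_eq]
  rw [h1, (hasFDerivAt_pj K e m (ne_of_gt hx) j).fderiv]
  simp only [ContinuousLinearMap.add_apply, ContinuousLinearMap.smul_apply, smul_eq_mul,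
    LR_apply, LT_apply, LqP_apply, LqQ_apply, Mm, Matrix.of_apply, uvec, vvec, qP, qQ]
  by_cases hij : i = j
  · subst hij
    by_cases hi : (i : ℕ) < m
    · have hi' : ¬ m ≤ (i : ℕ) := by omega
      simp only [hi, hi', if_true, if_false, and_true, true_and, if_pos rfl]
      unfold aF bF; ring
    · have hi' : m ≤ (i : ℕ) := by omega
      simp only [hi, hi', if_true, if_false, and_true, true_and, if_pos rfl]
      unfold aF bF; ring
  · by_cases hi : (i : ℕ) < m <;> by_cases hj : (j : ℕ) < m <;>
      · have hj' : (m ≤ (j : ℕ)) ↔ ¬ ((j : ℕ) < m) := by omega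
        have hi' : (m ≤ (i : ℕ)) ↔ ¬ ((i : ℕ) < m) := by omega
        simp only [hi, hj, hij, hi', hj', if_true, if_false, and_false, false_and,
          not_true, not_false_iff, if_neg, if_pos]
        ring


lemma card_filter_lt (m : ℕ) (hmn : m ≤ n) :
    (Finset.univ.filter (fun i : Fin n => (i : ℕ) < m)).card = m := by
  have : (Finset.univ.filter (fun i : Fin n => (i : ℕ) < m))
      = Finset.map (Fin.castLEEmb hmn) Finset.univ := by
    ext i
    simp only [Finset.mem_filter, Finset.mem_univ, true_and, Finset.mem_map,
      Fin.castLEEmb, Function.Embedding.coeFn_mk]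
    constructor
    · intro hi; exact ⟨⟨(i : ℕ), hi⟩, by ext; simp⟩
    · rintro ⟨a, rfl⟩; simpa using a.isLt
  rw [this, Finset.card_map, Finset.card_univ, Fintype.card_fin]

lemma det_Mm (m k : ℕ) (hm : 0 < m) (hk : 0 < k) (hn : n = m + k)
    (d1 d2 A B : ℝ) (hd1 : d1 ≠ 0) (hd2 : d2 ≠ 0) (x : Fin n → ℝ) :
    (Mm m d1 d2 A B x).det =
      d1 ^ (m - 1) * d2 ^ (k - 1) *
        (d1 * d2 + A * (∑ i, uvec m x i ^ 2) * d2
          - B ^ 2 * (∑ i, uvec m x i ^ 2) * (∑ i, vvec m x i ^ 2)) := by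
  set ρ := ∑ i, uvec m x i ^ 2 with hρ
  set τ := ∑ i, vvec m x i ^ 2 with hτ
  set dv : Fin n → ℝ := fun i => if (i : ℕ) < m then d1 else d2 with hdv
  have hdvne : ∀ i, dv i ≠ 0 := by
    intro i; by_cases hi : (i : ℕ) < m <;> simp [hdv, hi, hd1, hd2]
  set D := Matrix.diagonal dv with hD
  set Dinv := Matrix.diagonal (fun i => (dv i)⁻¹) with hDinv
  set U : Matrix (Fin n) (Fin 2) ℝ :=
    Matrix.of (fun i a => if a = 0 then uvec m x i else vvec m x i) with hU
  set W2 : Matrix (Fin 2) (Fin n) ℝ :=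
    Matrix.of (fun a j => if a = 0 then A * uvec m x j + B * vvec m x j else B * uvec m x j)
    with hW2
  have huv : ∀ i, uvec m x i * vvec m x i = 0 := by
    intro i; by_cases hi : (i : ℕ) < m <;> simp [uvec, vvec, hi]
  have hsplit : Mm m d1 d2 A B x = D + U * W2 := by
    ext i j
    simp only [Mm, Matrix.of_apply, Matrix.add_apply, Matrix.mul_apply, Fin.sum_univ_two,
      hU, hW2, hD, Matrix.diagonal_apply, hdv]
    norm_num
    ring
  have hDD : D * Dinv = 1 := by
    rw [hD, hDinv, Matrix.diagonal_mul_diagonal]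
    have : (fun i => dv i * (dv i)⁻¹) = fun _ => (1 : ℝ) := by
      funext i; exact mul_inv_cancel₀ (hdvne i)
    rw [this, Matrix.diagonal_one]
  have hfact : D + U * W2 = D * (1 + Dinv * (U * W2)) := by
    rw [mul_add, mul_one, ← Matrix.mul_assoc, hDD, Matrix.one_mul]
  have hdet1 : (Mm m d1 d2 A B x).det = D.det * (1 + W2 * (Dinv * U)).det := by
    rw [hsplit, hfact, Matrix.det_mul]
    congr 1
    rw [← Matrix.mul_assoc, Matrix.det_one_add_mul_comm]
  -- det D
  have hdetD : D.det = d1 ^ m * d2 ^ k := by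
    rw [hD, Matrix.det_diagonal, hdv]
    rw [Finset.prod_ite (fun _ => d1) (fun _ => d2), Finset.prod_const, Finset.prod_const]
    have h1 : (Finset.univ.filter (fun i : Fin n => (i : ℕ) < m)).card = m :=
      card_filter_lt m (by omega)
    have h2 : (Finset.univ.filter (fun i : Fin n => ¬ (i : ℕ) < m)).card = k := by
      have := Finset.card_filter_add_card_filter_not
        (s := (Finset.univ : Finset (Fin n))) (p := fun i : Fin n => (i : ℕ) < m)
      simp only [Finset.card_univ, Fintype.card_fin] at this
      omega
    rw [h1, h2]
  -- entries of the 2x2 matrix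
  have hDU : ∀ (j : Fin n) (b : Fin 2), (Dinv * U) j b = (dv j)⁻¹ * U j b := by
    intro j b; rw [hDinv, Matrix.diagonal_mul]
  have e00 : (W2 * (Dinv * U)) 0 0 = A * d1⁻¹ * ρ := by
    simp only [Matrix.mul_apply, hDU]
    rw [hρ, Finset.mul_sum]
    apply Finset.sum_congr rfl
    intro j _
    by_cases hj : (j : ℕ) < m <;> simp [hW2, hU, uvec, vvec, hj, hdv] <;> ring
  have e01 : (W2 * (Dinv * U)) 0 1 = B * d2⁻¹ * τ := by
    simp only [Matrix.mul_apply, hDU]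
    rw [hτ, Finset.mul_sum]
    apply Finset.sum_congr rfl
    intro j _
    by_cases hj : (j : ℕ) < m <;> simp [hW2, hU, uvec, vvec, hj, hdv] <;> ring
  have e10 : (W2 * (Dinv * U)) 1 0 = B * d1⁻¹ * ρ := by
    simp only [Matrix.mul_apply, hDU]
    rw [hρ, Finset.mul_sum]
    apply Finset.sum_congr rfl
    intro j _
    by_cases hj : (j : ℕ) < m <;> simp [hW2, hU, uvec, vvec, hj, hdv] <;> ring
  have e11 : (W2 * (Dinv * U)) 1 1 = 0 := by
    simp only [Matrix.mul_apply, hDU]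
    apply Finset.sum_eq_zero
    intro j _
    by_cases hj : (j : ℕ) < m <;> simp [hW2, hU, uvec, vvec, hj, hdv]
  have hdet2 : (1 + W2 * (Dinv * U)).det
      = (1 + A * d1⁻¹ * ρ) * 1 - (B * d2⁻¹ * τ) * (B * d1⁻¹ * ρ) := by
    rw [Matrix.det_fin_two]
    simp only [Matrix.add_apply, Matrix.one_apply_eq, Matrix.one_apply_ne (by norm_num : (0 : Fin 2) ≠ 1),
      Matrix.one_apply_ne (by norm_num : (1 : Fin 2) ≠ 0), e00, e01, e10, e11]
    ring
  rw [hdet1, hdetD, hdet2]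
  have hm1 : m = (m - 1) + 1 := by omega
  have hk1 : k = (k - 1) + 1 := by omega
  rw [hm1, hk1, pow_succ, pow_succ]
  rw [show (m - 1) + 1 - 1 = m - 1 by omega, show (k - 1) + 1 - 1 = k - 1 by omega]
  field_simp

end S10


lemma key_alg (m k nn : ℕ) (hk : 0 < k) (hkm : k < m) (hnn : nn = m + k)
    (c e P ρ τ S d1 d2 A B : ℝ) (hρ : ρ ≠ 0) (hP : P ≠ 0)
    (hS : S = 1 - τ / P ^ 2)
    (hPj : P ^ (m - k) = ρ ^ m)
    (hc : c ^ nn * e ^ m * (2 * e - 1) = 1)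
    (hd1 : d1 = c * e * (P / ρ) * S)
    (hd2 : d2 = c / P)
    (hA : A = 2 * c * e * ((e - 1) * P / ρ ^ 2 + (e + 1) * τ / (P * ρ ^ 2)))
    (hB : B = -(2 * c * e) / (P * ρ)) :
    d1 ^ (m - 1) * d2 ^ (k - 1) * (d1 * d2 + A * ρ * d2 - B ^ 2 * ρ * τ) = S ^ m := by
  have hbr : d1 * d2 + A * ρ * d2 - B ^ 2 * ρ * τ = c ^ 2 * e * (2 * e - 1) * S / ρ := by
    subst hd1 hd2 hA hB hS
    field_simp
    ring
  rw [hbr, hd1, hd2]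
  -- rename exponents
  obtain ⟨j, hj⟩ : ∃ j, m - k = j + 1 := ⟨m - k - 1, by omega⟩
  obtain ⟨k1, hk1⟩ : ∃ k1, k = k1 + 1 := ⟨k - 1, by omega⟩
  have hm : m = k1 + j + 2 := by omega
  have hm1 : m - 1 = k1 + j + 1 := by omega
  have hkk1 : k - 1 = k1 := by omega
  have hnn' : nn = 2 * k1 + j + 3 := by omega
  rw [hm1, hkk1]
  rw [hj] at hPj
  rw [hm] at hPj
  rw [hnn'] at hc
  rw [hm] at hc ⊢
  have key : (c * e * (P / ρ) * S) ^ (k1 + j + 1) * (c / P) ^ k1 * (c ^ 2 * e * (2 * e - 1) * S / ρ)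
      = (c ^ (2 * k1 + j + 3) * e ^ (k1 + j + 2) * (2 * e - 1)) * (P ^ k1 * P ^ (j + 1) / P ^ k1)
        / ρ ^ (k1 + j + 2) * S ^ (k1 + j + 2) := by
    ring
  rw [key, hc, mul_div_cancel_left₀ _ (pow_ne_zero k1 hP), hPj, one_mul, div_self (pow_ne_zero _ hρ)]
  ring

/-- The Hessian matrix of `u` at `x`, with entries the iterated directional derivatives
along the standard basis vectors of Euclidean space. -/
noncomputable def hess (n : ℕ) (u : EuclideanSpace ℝ (Fin n) → ℝ)
    (x : EuclideanSpace ℝ (Fin n)) : Matrix (Fin n) (Fin n) ℝ :=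
  Matrix.of fun i j =>
    fderiv ℝ (fun y => fderiv ℝ u y (EuclideanSpace.single j 1)) x (EuclideanSpace.single i 1)

theorem stmt_10 (n k : ℕ) (hn : 3 ≤ n) (hk : 1 ≤ k) (hkn : 2 * k < n)
    (γ : ℝ) (hγ : γ = 2 * ((n : ℝ) - k) / ((n : ℝ) - 2 * k))
    (r t : EuclideanSpace ℝ (Fin n) → ℝ)
    (hr : ∀ x, r x = Real.sqrt (∑ i : Fin n, if (i : ℕ) < n - k then (x i) ^ 2 else 0))
    (ht : ∀ x, t x = Real.sqrt (∑ i : Fin n, if n - k ≤ (i : ℕ) then (x i) ^ 2 else 0))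
    (w : EuclideanSpace ℝ (Fin n) → ℝ)
    (hw : ∀ x, ((γ / 2) ^ (1 - (k : ℝ) / n) * (γ - 1) ^ ((1 : ℝ) / n)) * w x =
      (r x ^ γ + r x ^ (-γ) * t x ^ 2) / 2) :
    ContDiffOn ℝ (⊤ : ℕ∞) w {x | 0 < t x ∧ t x < r x ^ γ} ∧
      ∀ x : EuclideanSpace ℝ (Fin n), 0 < t x → t x < r x ^ γ →
        (hess n w x).det = (1 - (r x ^ (-γ) * t x) ^ 2) ^ (n - k) := by
  have hncast : (0:ℝ) < (n:ℝ) - 2*k := by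
    have := (Nat.cast_lt (α := ℝ)).mpr hkn; push_cast at this; linarith
  have hnk : (0:ℝ) < (n:ℝ) - k := by
    have := (Nat.cast_lt (α := ℝ)).mpr hkn
    have hk' := (Nat.cast_le (α := ℝ)).mpr hk
    push_cast at this hk' ⊢; linarith
  set m := n - k with hmdef
  have hmk : m + k = n := by omega
  have hkm : k < m := by omega
  have hm0 : 0 < m := by omega
  have hmcast : (m:ℝ) = (n:ℝ) - k := by
    rw [hmdef]; push_cast [Nat.cast_sub (by omega : k ≤ n)]; ring
  set e := γ / 2 with he
  have hee : e = ((n:ℝ) - k) / ((n:ℝ) - 2*k) := by rw [he, hγ]; ring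
  have he1 : 1 < e := by
    rw [hee, lt_div_iff₀ hncast]
    have hk' : (1:ℝ) ≤ (k:ℝ) := by exact_mod_cast hk
    linarith
  have he0 : 0 < e := by linarith
  have hγ2 : (0:ℝ) < γ / 2 := by rw [← he]; linarith
  have hγ1 : (0:ℝ) < γ - 1 := by
    have h2e : γ = 2 * e := by rw [he]; ring
    linarith
  set C := (γ / 2) ^ (1 - (k : ℝ) / n) * (γ - 1) ^ ((1 : ℝ) / n) with hCdef
  have hCpos : 0 < C := mul_pos (Real.rpow_pos_of_pos hγ2 _) (Real.rpow_pos_of_pos hγ1 _)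
  set K := C⁻¹ / 2 with hKdef
  -- identify r, t with Rq, Tq
  have hRnn : ∀ x, 0 ≤ S10.Rq (n := n) m x := S10.Rq_nonneg m
  have hTnn : ∀ x, 0 ≤ S10.Tq (n := n) m x := S10.Tq_nonneg m
  have hRr : ∀ x, r x = Real.sqrt (S10.Rq m x) := by
    intro x; rw [hr x]; simp only [S10.Rq]
  have hTt : ∀ x, t x = Real.sqrt (S10.Tq m x) := by
    intro x; rw [ht x]; simp only [S10.Tq]
  have hrg : ∀ x, r x ^ γ = S10.Rq m x ^ e := by
    intro x
    rw [hRr x, Real.sqrt_eq_rpow, ← Real.rpow_mul (hRnn x)]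
    congr 1; rw [he]; ring
  have hrng : ∀ x, r x ^ (-γ) = S10.Rq m x ^ (-e) := by
    intro x
    rw [hRr x, Real.sqrt_eq_rpow, ← Real.rpow_mul (hRnn x)]
    congr 1; rw [he]; ring
  have ht2 : ∀ x, t x ^ 2 = S10.Tq m x := by
    intro x; rw [hTt x]; exact Real.sq_sqrt (hTnn x)
  have hwW : w = S10.Wf' K e m := by
    funext x
    have h := hw x
    have h2 : w x = C⁻¹ * ((r x ^ γ + r x ^ (-γ) * t x ^ 2) / 2) := by
      rw [← h, ← mul_assoc, inv_mul_cancel₀ (ne_of_gt hCpos), one_mul]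
    rw [h2, hrg x, hrng x, ht2 x]
    simp only [S10.Wf', hKdef]
    ring
  have hreg : ∀ x, 0 < t x → t x < r x ^ γ → 0 < S10.Rq m x := by
    intro x h0 h1
    rcases lt_or_eq_of_le (hRnn x) with h | h
    · exact h
    · exfalso
      have hz : r x ^ γ = 0 := by
        rw [hrg x, ← h]; exact Real.zero_rpow (ne_of_gt he0)
      linarith
  constructor
  · intro x hx
    obtain ⟨hx0, hx1⟩ := hx
    have hR : 0 < S10.Rq m x := hreg x hx0 hx1
    apply ContDiffAt.contDiffWithinAt
    rw [hwW]
    have h1 : ContDiffAt ℝ (⊤ : ℕ∞) (fun y => S10.Rq m y ^ e) x :=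
      (S10.contDiff_Rq m).contDiffAt.rpow_const_of_ne (ne_of_gt hR)
    have h2 : ContDiffAt ℝ (⊤ : ℕ∞) (fun y => S10.Rq m y ^ (-e)) x :=
      (S10.contDiff_Rq m).contDiffAt.rpow_const_of_ne (ne_of_gt hR)
    exact contDiffAt_const.mul (h1.add (h2.mul (S10.contDiff_Tq m).contDiffAt))
  · intro x hx0 hx1
    have hR : 0 < S10.Rq m x := hreg x hx0 hx1
    set ρ := S10.Rq m x with hρdef
    set τ := S10.Tq m x with hτdef
    set P := ρ ^ e with hPdef
    have hPpos : 0 < P := Real.rpow_pos_of_pos hR e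
    have hτnn : 0 ≤ τ := hTnn x
    have hτP : τ < P ^ 2 := by
      have h1 : t x < P := by
        rw [hPdef, hρdef, ← hrg x]; exact hx1
      have h2 : t x ^ 2 < P ^ 2 := by nlinarith
      rw [ht2 x] at h2; exact h2
    set S := 1 - τ / P ^ 2 with hSdef
    have hS0 : 0 < S := by
      rw [hSdef, sub_pos, div_lt_one (by positivity)]; exact hτP
    -- rpow rewrites
    have hrw1 : ρ ^ (e - 1) = P / ρ := by
      rw [Real.rpow_sub hR, Real.rpow_one, hPdef]
    have hrw2 : ρ ^ (-e - 1) = 1 / (P * ρ) := by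
      rw [show -e - 1 = -(e + 1) by ring, Real.rpow_neg (le_of_lt hR),
        Real.rpow_add hR, Real.rpow_one, hPdef, one_div]
    have hrw3 : ρ ^ (-e) = 1 / P := by
      rw [Real.rpow_neg (le_of_lt hR), hPdef, one_div]
    have hrsq : ρ ^ (2:ℝ) = ρ ^ 2 := by
      rw [show (2:ℝ) = ((2:ℕ):ℝ) by norm_num, Real.rpow_natCast]
    have hrw4 : ρ ^ (e - 2) = P / ρ ^ 2 := by
      rw [Real.rpow_sub hR, hrsq, hPdef]
    have hrw5 : ρ ^ (-e - 2) = 1 / (P * ρ ^ 2) := by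
      rw [show -e - 2 = -(e + 2) by ring, Real.rpow_neg (le_of_lt hR),
        Real.rpow_add hR, hrsq, hPdef, one_div]
    -- the four coefficient identities
    have hd1 : 2 * S10.aF K e m x = C⁻¹ * e * (P / ρ) * S := by
      simp only [S10.aF, ← hρdef, ← hτdef, hrw1, hrw2, hKdef, hSdef]
      field_simp
    have hd2 : 2 * S10.bF K e m x = C⁻¹ / P := by
      simp only [S10.bF, ← hρdef, hrw3, hKdef]
      field_simp
    have hA : 4 * (K * e * ((e - 1) * ρ ^ (e - 2) + (e + 1) * ρ ^ (-e - 2) * τ))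
        = 2 * C⁻¹ * e * ((e - 1) * P / ρ ^ 2 + (e + 1) * τ / (P * ρ ^ 2)) := by
      rw [hrw4, hrw5, hKdef]
      field_simp
      ring
    have hB : 4 * (-(K * e) * ρ ^ (-e - 1)) = -(2 * C⁻¹ * e) / (P * ρ) := by
      rw [hrw2, hKdef]
      field_simp
      ring
    have hd1ne : 2 * S10.aF K e m x ≠ 0 := by
      rw [hd1]
      have : 0 < C⁻¹ * e * (P / ρ) * S := by positivity
      exact ne_of_gt this
    have hd2ne : 2 * S10.bF K e m x ≠ 0 := by
      rw [hd2]; positivity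
    -- power relation
    have hPj : P ^ (m - k) = ρ ^ m := by
      have hcast2 : ((m - k : ℕ) : ℝ) = (n:ℝ) - 2*k := by
        have h1 : m - k = n - 2*k := by omega
        rw [h1, Nat.cast_sub (by omega : 2*k ≤ n)]; push_cast; ring
      have hemk : e * ((m - k : ℕ) : ℝ) = (m : ℝ) := by
        rw [hcast2, hee, div_mul_cancel₀ _ (ne_of_gt hncast), hmcast]
      rw [hPdef, ← Real.rpow_natCast (ρ ^ e) (m - k), ← Real.rpow_mul (le_of_lt hR),
        hemk, Real.rpow_natCast]
    -- normalization constant relation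
    have hc : (C⁻¹) ^ n * e ^ m * (2 * e - 1) = 1 := by
      have hne0 : (n:ℝ) ≠ 0 := by positivity
      have hCn : C ^ n = e ^ m * (γ - 1) := by
        rw [hCdef, mul_pow]
        rw [← Real.rpow_natCast ((γ/2) ^ (1 - (k:ℝ)/n)) n, ← Real.rpow_natCast ((γ-1) ^ ((1:ℝ)/n)) n,
          ← Real.rpow_mul (le_of_lt hγ2), ← Real.rpow_mul (le_of_lt hγ1)]
        rw [show (1 - (k:ℝ)/n) * n = (m:ℝ) by rw [hmcast]; field_simp]
        rw [show ((1:ℝ)/n) * n = 1 by field_simp]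
        rw [Real.rpow_natCast, Real.rpow_one, ← he]
      have h2e : 2 * e - 1 = γ - 1 := by rw [he]; ring
      rw [inv_pow, h2e]
      rw [inv_mul_eq_div, div_mul_eq_mul_div, ← hCn] at *
      rw [hCn]
      field_simp [hCn]
    -- now compute the determinant
    rw [hwW]
    have hhess : hess n (S10.Wf' K e m) x = S10.hess' (S10.Wf' K e m) x := rfl
    rw [hhess, S10.hess'_Wf'_eq K e m hR]
    rw [S10.det_Mm m k hm0 (by omega) (by omega) _ _ _ _ hd1ne hd2ne x]
    have hu : (∑ i, S10.uvec m x i ^ 2) = ρ := by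
      rw [hρdef]
      simp only [S10.Rq, S10.uvec]
      apply Finset.sum_congr rfl
      intro i _
      by_cases hi : (i : ℕ) < m <;> simp [hi]
    have hv : (∑ i, S10.vvec m x i ^ 2) = τ := by
      rw [hτdef]
      simp only [S10.Tq, S10.vvec]
      apply Finset.sum_congr rfl
      intro i _
      by_cases hi : (i : ℕ) < m
      · have : ¬ m ≤ (i : ℕ) := by omega
        simp [hi, this]
      · have : m ≤ (i : ℕ) := by omega
        simp [hi, this]
    rw [hu, hv]
    have hrhs : (1 : ℝ) - (r x ^ (-γ) * t x) ^ 2 = S := by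
      rw [hrng x, mul_pow, ← hρdef, hrw3, ht2 x, ← hτdef, hSdef]
      field_simp
    rw [hrhs]
    exact key_alg m k n (by omega) hkm (by omega) C⁻¹ e P ρ τ S _ _ _ _
      (ne_of_gt hR) (ne_of_gt hPpos) hSdef hPj hc hd1 hd2 hA hB
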